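/- Let χ = (P₁,P₂,P₃,P₄) be a vector field on S¹×S² of degree n (i.e., max deg Pᵢ = n) with P₄ ≠ 0 (equivalently, χ has only finitely many invariant parallel hyperplanes). Then the number of real numbers k such that the hyperplane x₄ = k is invariant under χ — equivalently, such that (x₄ − k) divides P₄ in ℝ[x₁,x₂,x₃,x₄] — is at most n − 1. Moreover, this bound is sharp: for every n ≥ 1 there exists a vector field on S¹×S² of degree n having exactly n − 1 distinct invariant parallel hyperplanes. -/

import Mathlib

open MvPolynomial

/-- The action of the polynomial vector field `χ = (P 0, P 1, P 2, P 3)` on a polynomial: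
`χf = Σᵢ Pᵢ ∂f/∂xᵢ`. -/
noncomputable def chi (P : Fin 4 → MvPolynomial (Fin 4) ℝ)
    (f : MvPolynomial (Fin 4) ℝ) : MvPolynomial (Fin 4) ℝ :=
  ∑ i, P i * pderiv i f

/-- `G_a = (x₁² + x₂² - a²)² + x₃² + x₄² - 1`, whose zero set is `S¹ × S²`. -/
noncomputable def Ga (a : ℝ) : MvPolynomial (Fin 4) ℝ :=
  (X 0 ^ 2 + X 1 ^ 2 - C (a ^ 2)) ^ 2 + X 2 ^ 2 + X 3 ^ 2 - 1

/-!
If `x₄ - k ∣ P₄` for all `k` in a finite set `T`, the pairwise coprime product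
`D = ∏_{k ∈ T} (x₄ - k)` divides `P₄`, say `P₄ = D Q`. The complex point
`p = (0, 0, 0, i√(a⁴ - 1))` lies on the complexified `S¹ × S²` and `∇G_a(p) = (0, 0, 0, 2p₄)`,
so `χG_a = K G_a` forces `P₄(p) = 0`. Since `p₄` is not real, `D(p) ≠ 0`; hence `Q(p) = 0`,
`Q` is not constant, and `|T| + 1 ≤ deg P₄ ≤ n`. The bound is attained by the rotation field
`x₄ ∂₃ - x₃ ∂₄`, which annihilates `G_a`, multiplied by `n - 1` distinct factors `x₄ - k`.
-/

namespace MvPolynomial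

section CommRing

variable {σ R : Type*} [CommRing R]

theorem totalDegree_X_sub_C [Nontrivial R] (i : σ) (r : R) : (X i - C r).totalDegree = 1 := by
  rw [sub_eq_add_neg, ← C_neg, totalDegree_add_eq_left_of_totalDegree_lt] <;>
    simp [totalDegree_X]

theorem X_sub_C_ne_zero [Nontrivial R] (i : σ) (r : R) : (X i - C r : MvPolynomial σ R) ≠ 0 :=
  fun h => by simpa [h] using totalDegree_X_sub_C i r

variable [IsDomain R]

theorem totalDegree_prod_X_sub_C (i : σ) (T : Finset R) :
    (∏ r ∈ T, (X i - C r)).totalDegree = T.card := by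
  classical
  induction T using Finset.induction_on with
  | empty => simp
  | insert r T hr ih =>
    rw [Finset.prod_insert hr, totalDegree_mul_of_isDomain (X_sub_C_ne_zero i r)
      (Finset.prod_ne_zero_iff.mpr fun s _ => X_sub_C_ne_zero i s), totalDegree_X_sub_C, ih,
      Finset.card_insert_of_notMem hr, add_comm]

theorem totalDegree_X_mul_prod_X_sub_C (i j : σ) (T : Finset R) :
    (X j * ∏ r ∈ T, (X i - C r)).totalDegree = T.card + 1 := by
  rw [totalDegree_mul_of_isDomain (X_ne_zero j)
    (Finset.prod_ne_zero_iff.mpr fun r _ => X_sub_C_ne_zero i r), totalDegree_X,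
    totalDegree_prod_X_sub_C, add_comm]

theorem setOf_X_sub_C_dvd_X_mul_prod {i j : σ} (hji : j ≠ i) (T : Finset R) :
    {r | X i - C r ∣ X j * ∏ t ∈ T, (X i - C t)} = T := by
  classical
  ext r
  refine ⟨fun ⟨q, hq⟩ => ?_, fun hr => dvd_mul_of_dvd_right (Finset.dvd_prod_of_mem _ hr) _⟩
  -- evaluate at a point with `xᵢ = r` and `xⱼ = 1`
  have h := congrArg (eval (Function.update 1 i r)) hq
  simp only [eval_mul, eval_sub, eval_X, eval_C, eval_prod, Function.update_self,
    Function.update_of_ne hji, Pi.one_apply, one_mul, sub_self, zero_mul,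
    Finset.prod_eq_zero_iff, sub_eq_zero] at h
  obtain ⟨t, ht, rfl⟩ := h
  exact ht

end CommRing

section Field

variable {σ K : Type*} [Field K]

theorem isCoprime_X_sub_C (i : σ) {r s : K} (h : r ≠ s) : IsCoprime (X i - C r) (X i - C s) := by
  have key : C (s - r)⁻¹ * (C s - C r) = (1 : MvPolynomial σ K) := by
    rw [← C_sub, ← C_mul, inv_mul_cancel₀ (sub_ne_zero.mpr h.symm), C_1]
  exact ⟨C (s - r)⁻¹, -C (s - r)⁻¹, by linear_combination key⟩

theorem prod_X_sub_C_dvd {i : σ} {p : MvPolynomial σ K} {T : Finset K}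
    (hT : ∀ r ∈ T, X i - C r ∣ p) : ∏ r ∈ T, (X i - C r) ∣ p :=
  Finset.prod_dvd_of_coprime (fun _ _ _ _ h => isCoprime_X_sub_C i h) hT

variable {L : Type*} [CommRing L] [IsDomain L] [Algebra K L] {p : MvPolynomial σ K} {g : σ → L}
  {i : σ}

theorem card_add_one_le_totalDegree_of_X_sub_C_dvd (hp : p ≠ 0) (hg : aeval g p = 0)
    (hgi : ∀ r, g i ≠ algebraMap K L r) {T : Finset K} (hT : ∀ r ∈ T, X i - C r ∣ p) :
    T.card + 1 ≤ p.totalDegree := by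
  obtain ⟨q, rfl⟩ := prod_X_sub_C_dvd hT
  have hprod : aeval g (∏ r ∈ T, (X i - C r)) ≠ 0 := by
    simp [map_prod, Finset.prod_ne_zero_iff, sub_eq_zero, hgi]
  have hq : aeval g q = 0 := by
    rw [map_mul] at hg
    exact (mul_eq_zero.mp hg).resolve_left hprod
  have hq0 : q ≠ 0 := right_ne_zero_of_mul hp
  have hq_deg : q.totalDegree ≠ 0 := by
    intro h
    rw [totalDegree_eq_zero_iff_eq_C.mp h, aeval_C,
      map_eq_zero_iff _ (algebraMap K L).injective] at hq
    exact hq0 (by rw [totalDegree_eq_zero_iff_eq_C.mp h, hq, C_0])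
  rw [totalDegree_mul_of_isDomain (left_ne_zero_of_mul hp) hq0, totalDegree_prod_X_sub_C]
  omega

theorem finite_setOf_X_sub_C_dvd (hp : p ≠ 0) (hg : aeval g p = 0)
    (hgi : ∀ r, g i ≠ algebraMap K L r) : {r | X i - C r ∣ p}.Finite := by
  by_contra hinf
  obtain ⟨T, hTS, hT⟩ := Set.Infinite.exists_subset_card_eq hinf p.totalDegree
  have := card_add_one_le_totalDegree_of_X_sub_C_dvd hp hg hgi fun r hr => hTS hr
  omega

theorem ncard_setOf_X_sub_C_dvd_add_one_le (hp : p ≠ 0) (hg : aeval g p = 0)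
    (hgi : ∀ r, g i ≠ algebraMap K L r) :
    {r | X i - C r ∣ p}.ncard + 1 ≤ p.totalDegree := by
  have hfin := finite_setOf_X_sub_C_dvd hp hg hgi
  rw [Set.ncard_eq_toFinset_card _ hfin]
  exact card_add_one_le_totalDegree_of_X_sub_C_dvd hp hg hgi fun r hr => hfin.mem_toFinset.mp hr

end Field

end MvPolynomial

theorem pderiv_two_Ga (a : ℝ) : pderiv 2 (Ga a) = 2 * X 2 := by
  simp [Ga, pderiv_X]

theorem pderiv_three_Ga (a : ℝ) : pderiv 3 (Ga a) = 2 * X 3 := by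
  simp [Ga, pderiv_X]

noncomputable def imagPoint (a : ℝ) : Fin 4 → ℂ := ![0, 0, 0, √(a ^ 4 - 1) * Complex.I]

section imagPoint

variable {a : ℝ} (ha : 1 < a)
include ha

theorem imagPoint_three_ne_ofReal (r : ℝ) : imagPoint a 3 ≠ algebraMap ℝ ℂ r := by
  intro h
  have him := congrArg Complex.im h
  simp [imagPoint] at him
  exact (Real.sqrt_pos.mpr (sub_pos.mpr (one_lt_pow₀ ha four_ne_zero))).ne' him

theorem aeval_imagPoint_Ga : aeval (imagPoint a) (Ga a) = 0 := by
  have hsq : (√(a ^ 4 - 1) : ℂ) ^ 2 = a ^ 4 - 1 := by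
    rw [← Complex.ofReal_pow, Real.sq_sqrt (sub_nonneg.mpr (one_lt_pow₀ ha four_ne_zero).le)]
    push_cast
    rfl
  simp [Ga, imagPoint, mul_pow, hsq]
  ring

theorem aeval_imagPoint_eq_zero_of_chi_Ga {P : Fin 4 → MvPolynomial (Fin 4) ℝ}
    (hP : ∃ K, chi P (Ga a) = K * Ga a) : aeval (imagPoint a) (P 3) = 0 := by
  obtain ⟨K, hK⟩ := hP
  have h := congrArg (aeval (imagPoint a)) hK
  rw [map_mul, aeval_imagPoint_Ga ha, mul_zero] at h
  have hgrad : aeval (imagPoint a) (chi P (Ga a)) =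
      aeval (imagPoint a) (P 3) * (2 * imagPoint a 3) := by
    simp [chi, Fin.sum_univ_four, Ga, pderiv_X, imagPoint]
  rw [hgrad] at h
  refine (mul_eq_zero.mp h).resolve_right (mul_ne_zero two_ne_zero ?_)
  simpa using imagPoint_three_ne_ofReal ha 0

end imagPoint

noncomputable def scaledRotation (T : Finset ℝ) : Fin 4 → MvPolynomial (Fin 4) ℝ :=
  ![0, 0, -(X 3 * ∏ k ∈ T, (X 3 - C k)), X 2 * ∏ k ∈ T, (X 3 - C k)]

theorem chi_scaledRotation_Ga (a : ℝ) (T : Finset ℝ) : chi (scaledRotation T) (Ga a) = 0 := by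
  simp [chi, Fin.sum_univ_four, scaledRotation, pderiv_two_Ga, pderiv_three_Ga]
  ring

theorem sup_totalDegree_scaledRotation (T : Finset ℝ) :
    (Finset.univ.sup fun i => (scaledRotation T i).totalDegree) = T.card + 1 := by
  simp [Fin.univ_succ, scaledRotation, totalDegree_X_mul_prod_X_sub_C]

theorem stmt_18 (a : ℝ) (ha : 1 < a) :
    (∀ (n : ℕ) (P : Fin 4 → MvPolynomial (Fin 4) ℝ),
      (∃ K : MvPolynomial (Fin 4) ℝ, chi P (Ga a) = K * Ga a) →
      (Finset.univ.sup fun i => (P i).totalDegree) = n →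
      P 3 ≠ 0 →
      {k : ℝ | (X 3 - C k) ∣ P 3}.Finite ∧
      {k : ℝ | (X 3 - C k) ∣ P 3}.ncard ≤ n - 1) ∧
    (∀ n : ℕ, 1 ≤ n →
      ∃ P : Fin 4 → MvPolynomial (Fin 4) ℝ,
        (∃ K : MvPolynomial (Fin 4) ℝ, chi P (Ga a) = K * Ga a) ∧
        (Finset.univ.sup fun i => (P i).totalDegree) = n ∧
        {k : ℝ | (X 3 - C k) ∣ P 3}.Finite ∧
        {k : ℝ | (X 3 - C k) ∣ P 3}.ncard = n - 1) := by
  refine ⟨fun n P hP hdeg hP3 => ?_, fun n hn => ?_⟩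
  · have hg := aeval_imagPoint_eq_zero_of_chi_Ga ha hP
    have hle : (P 3).totalDegree ≤ n :=
      hdeg ▸ Finset.le_sup (f := fun i => (P i).totalDegree) (Finset.mem_univ 3)
    have hcard := ncard_setOf_X_sub_C_dvd_add_one_le hP3 hg (imagPoint_three_ne_ofReal ha)
    exact ⟨finite_setOf_X_sub_C_dvd hP3 hg (imagPoint_three_ne_ofReal ha), by omega⟩
  · obtain ⟨T, hT⟩ := Infinite.exists_subset_card_eq ℝ (n - 1)
    have hset : {k | X 3 - C k ∣ scaledRotation T 3} = T :=
      setOf_X_sub_C_dvd_X_mul_prod (by decide) T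
    refine ⟨scaledRotation T, ⟨0, by rw [chi_scaledRotation_Ga, zero_mul]⟩, ?_, ?_⟩
    · rw [sup_totalDegree_scaledRotation]
      omega
    · rw [hset, Set.ncard_coe_finset, hT]
      exact ⟨T.finite_toSet, rfl⟩
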